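/- Let λ ∈ ℝ with |λ| ≥ 1, let d ≥ 1 and let A = J(λ,d) be the Jordan miniblock. Let N̄ ≥ 1, let L be an N̄ × N̄ real matrix, let n : Fin N̄ → ℕ satisfy 1 ≤ n i ≤ d for all i, let S be the associated block-diagonal selection matrix, let k ∈ ℝ, and set M := S · ((I_{N̄} − k·L) ⊗ A) · Sᵀ. Then for every initial vector η(0) the sequence Mᵗ · η(0) tends to the zero vector as t → ∞ if and only if for every complex eigenvalue μ of S · (L ⊗ I_d) · Sᵀ one has |1 − k·μ| < 1/|λ|. -/

import Mathlib

open Matrix Filter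
open scoped Kronecker

/-- The `d × d` Jordan miniblock `J(λ,d)`: `λ` on the diagonal, `1` on the
superdiagonal, `0` elsewhere. -/
def jordanBlock (lam : ℝ) (d : ℕ) : Matrix (Fin d) (Fin d) ℝ :=
  Matrix.of fun i j => if i = j then lam else if (i : ℕ) + 1 = (j : ℕ) then 1 else 0

/-- The block-diagonal selection matrix `S = diag{S_1,…,S_N̄}` where
`S_i = [I_{n i}  0]` has size `n i × d`. -/
def selMatrix (d N : ℕ) (n : Fin N → ℕ) :
    Matrix (Σ i : Fin N, Fin (n i)) (Fin N × Fin d) ℝ :=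
  Matrix.of fun p q => if p.1 = q.1 ∧ (p.2 : ℕ) = (q.2 : ℕ) then 1 else 0

/-- A square real matrix is Schur stable if all of its complex eigenvalues have
modulus strictly less than one. -/
def SchurStable {m : Type} [Fintype m] [DecidableEq m] (M : Matrix m m ℝ) : Prop :=
  ∀ μ ∈ spectrum ℂ (M.map Complex.ofReal), ‖μ‖ < 1

/-!
Order the indices by their position inside the Jordan miniblock. Since `J(λ,d)` is upper
triangular and `S` only discards trailing positions, `M` is block upper triangular for this order,
and its diagonal blocks are those of `λ (I - k C)` with `C = S (L ⊗ I_d) Sᵀ`. Hence `M` and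
`λ (I - k C)` have the same characteristic polynomial, so by spectral mapping the eigenvalues of
`M` are the numbers `λ (1 - k μ)`, `μ` an eigenvalue of `C`. Finally, `Mᵗ η → 0` for every `η`
means `Mᵗ → 0`, which holds iff every eigenvalue of `M` has modulus `< 1`: one direction because
`μᵗ` is an eigenvalue of `Mᵗ`, the other by Gelfand's formula.
-/

open Topology

-- Any algebra norm would do: it only serves to make complex matrices a Banach algebra.
attribute [local instance] Matrix.linftyOpNormedRing Matrix.linftyOpNormedAlgebra

namespace spectrum

variable {A : Type*} [NormedRing A] [NormedAlgebra ℂ A] [CompleteSpace A]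

theorem norm_lt_one_of_tendsto_pow {a : A} (h : Tendsto (a ^ ·) atTop (𝓝 0)) {μ : ℂ}
    (hμ : μ ∈ spectrum ℂ a) : ‖μ‖ < 1 := by
  have hpow : Tendsto (‖μ‖ ^ ·) atTop (𝓝 0) := by
    refine squeeze_zero (fun _ => by positivity) (fun t => ?_)
      (by simpa using h.norm.mul_const ‖(1 : A)‖)
    simpa [norm_pow] using norm_le_norm_mul_of_mem (pow_mem_pow a t hμ)
  simpa [abs_of_nonneg (norm_nonneg μ)] using _root_.tendsto_pow_atTop_nhds_zero_iff.mp hpow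

theorem tendsto_pow_of_forall_norm_lt_one [Nontrivial A] {a : A}
    (h : ∀ μ ∈ spectrum ℂ a, ‖μ‖ < 1) : Tendsto (a ^ ·) atTop (𝓝 0) := by
  have hρ : spectralRadius ℂ a < 1 := by
    simpa using spectralRadius_lt_of_forall_lt a (r := 1) fun z hz => by exact_mod_cast h z hz
  obtain ⟨r, hρr, hr1⟩ := ENNReal.lt_iff_exists_nnreal_btwn.mp hρ
  have hbound : ∀ᶠ t : ℕ in atTop, ‖a ^ t‖ ≤ (r : ℝ) ^ t := by
    filter_upwards [(pow_nnnorm_pow_one_div_tendsto_nhds_spectralRadius a).eventually_lt_const hρr,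
      eventually_ge_atTop 1] with t ht ht1
    have ht0 : (0 : ℝ) < t := by exact_mod_cast ht1
    rw [one_div, ENNReal.rpow_inv_lt_iff ht0, ENNReal.rpow_natCast, ← ENNReal.coe_pow,
      ENNReal.coe_lt_coe, ← NNReal.coe_lt_coe] at ht
    exact_mod_cast ht.le
  exact squeeze_zero_norm' hbound
    (tendsto_pow_atTop_nhds_zero_of_lt_one r.coe_nonneg (by exact_mod_cast hr1))

theorem tendsto_pow_atTop_nhds_zero_iff [Nontrivial A] (a : A) :
    Tendsto (a ^ ·) atTop (𝓝 0) ↔ ∀ μ ∈ spectrum ℂ a, ‖μ‖ < 1 :=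
  ⟨fun h _ => norm_lt_one_of_tendsto_pow h, tendsto_pow_of_forall_norm_lt_one⟩

theorem smul_one_sub_smul_eq_image [Nontrivial A] (x : A) (a b : ℂ) :
    spectrum ℂ (a • (1 - b • x)) = (fun μ => a * (1 - b * μ)) '' spectrum ℂ x := by
  have := map_polynomial_aeval x (Polynomial.C a * (1 - Polynomial.C b * Polynomial.X))
  simp only [map_mul, map_sub, map_one, Polynomial.aeval_C, Polynomial.aeval_X,
    Polynomial.eval_mul, Polynomial.eval_sub, Polynomial.eval_one, Polynomial.eval_C,
    Polynomial.eval_X] at this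
  simpa only [Algebra.smul_def] using this

end spectrum

namespace Matrix

theorem tendsto_mulVec_nhds_zero_iff {ι m n R : Type*} [Fintype n] [DecidableEq n] [Semiring R]
    [TopologicalSpace R] [IsTopologicalSemiring R] {l : Filter ι} {B : ι → Matrix m n R} :
    (∀ η, Tendsto (fun t => B t *ᵥ η) l (𝓝 0)) ↔ Tendsto B l (𝓝 0) := by
  constructor
  · intro h
    refine tendsto_pi_nhds.2 fun i => tendsto_pi_nhds.2 fun j => ?_
    simpa [mulVec_single_one] using tendsto_pi_nhds.1 (h (Pi.single j 1)) i
  · intro h η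
    exact (continuous_id.matrix_mulVec continuous_const).tendsto' 0 0 (zero_mulVec η) |>.comp h

theorem tendsto_map_ofReal_nhds_zero_iff {ι m n : Type*} {l : Filter ι}
    {B : ι → Matrix m n ℝ} :
    Tendsto (fun t => (B t).map Complex.ofReal) l (𝓝 0) ↔ Tendsto B l (𝓝 0) := by
  refine tendsto_pi_nhds.trans <| (forall_congr' fun i => ?_).trans tendsto_pi_nhds.symm
  refine tendsto_pi_nhds.trans <| (forall_congr' fun j => ?_).trans tendsto_pi_nhds.symm
  simpa using tendsto_ofReal_iff (f := fun t => B t i j) (x := 0)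

theorem tendsto_pow_mulVec_iff_schurStable {m : Type} [Fintype m] [DecidableEq m] [Nonempty m]
    (M : Matrix m m ℝ) :
    (∀ η, Tendsto (fun t : ℕ => (M ^ t) *ᵥ η) atTop (𝓝 0)) ↔ SchurStable M := by
  rw [tendsto_mulVec_nhds_zero_iff, ← tendsto_map_ofReal_nhds_zero_iff, SchurStable,
    ← spectrum.tendsto_pow_atTop_nhds_zero_iff]
  simp only [show ∀ t : ℕ, (M ^ t).map Complex.ofReal = M.map Complex.ofRealHom ^ t from
    Matrix.map_pow M Complex.ofRealHom]
  rfl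

theorem charpoly_eq_of_blockTriangular {m R α : Type*} [Fintype m] [DecidableEq m]
    [CommRing R] [LinearOrder α] {A B : Matrix m m R} {b : m → α}
    (hA : A.BlockTriangular b) (hB : B.BlockTriangular b)
    (h : ∀ i j, b i = b j → A i j = B i j) : A.charpoly = B.charpoly := by
  rw [hA.charpoly, hB.charpoly]
  refine Finset.prod_congr rfl fun a _ => congrArg charpoly ?_
  ext ⟨i, hi⟩ ⟨j, hj⟩
  exact h i j (hi.trans hj.symm)

theorem spectrum_map_ofReal_eq_of_charpoly_eq {m : Type*} [Fintype m] [DecidableEq m]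
    {A B : Matrix m m ℝ} (h : A.charpoly = B.charpoly) :
    spectrum ℂ (A.map Complex.ofReal) = spectrum ℂ (B.map Complex.ofReal) := by
  ext μ
  simp only [mem_spectrum_iff_isRoot_charpoly]
  rw [show A.map Complex.ofReal = A.map Complex.ofRealHom from rfl,
    show B.map Complex.ofReal = B.map Complex.ofRealHom from rfl, charpoly_map, charpoly_map, h]

end Matrix

theorem jordanBlock_blockTriangular (lam : ℝ) (d : ℕ) :
    (jordanBlock lam d).BlockTriangular id := by
  intro i j (hji : j < i)
  have : ¬ (i : ℕ) + 1 = j := by have := Fin.lt_def.mp hji; omega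
  simp [jordanBlock, hji.ne', this]

theorem diagonal_diag_jordanBlock (lam : ℝ) (d : ℕ) :
    diagonal (jordanBlock lam d).diag = lam • 1 := by
  rw [smul_one_eq_diagonal]
  congr
  ext i
  simp [jordanBlock]

section Selection

variable {d N : ℕ} {n : Fin N → ℕ}

theorem selMatrix_apply (hnd : ∀ i, n i ≤ d) (p : Σ i : Fin N, Fin (n i))
    (u : Fin N × Fin d) :
    selMatrix d N n p u = if (p.1, Fin.castLE (hnd p.1) p.2) = u then 1 else 0 := by
  simp only [selMatrix, of_apply, Prod.ext_iff, Fin.ext_iff, Fin.val_castLE]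

theorem selMatrix_mul_kronecker_mul_transpose_apply (hnd : ∀ i, n i ≤ d)
    (A : Matrix (Fin N) (Fin N) ℝ) (X : Matrix (Fin d) (Fin d) ℝ)
    (p q : Σ i : Fin N, Fin (n i)) :
    (selMatrix d N n * (A ⊗ₖ X) * (selMatrix d N n)ᵀ) p q =
      A p.1 q.1 * X (Fin.castLE (hnd p.1) p.2) (Fin.castLE (hnd q.1) q.2) := by
  simp only [mul_apply, transpose_apply, selMatrix_apply hnd, ite_mul, one_mul, zero_mul,
    mul_ite, mul_one, mul_zero, Finset.sum_ite_eq, Finset.mem_univ, if_true, kroneckerMap_apply]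

theorem selMatrix_mul_transpose (hnd : ∀ i, n i ≤ d) :
    selMatrix d N n * (selMatrix d N n)ᵀ = 1 := by
  ext p q
  have h := selMatrix_mul_kronecker_mul_transpose_apply hnd 1 1 p q
  rw [one_kronecker_one, Matrix.mul_one] at h
  rw [h]
  obtain ⟨i, a⟩ := p
  obtain ⟨j, b⟩ := q
  by_cases hij : i = j
  · subst hij
    simp [one_apply, Fin.castLE_inj]
  · simp [one_apply, hij]

theorem blockTriangular_selMatrix_mul_kronecker_mul_transpose (hnd : ∀ i, n i ≤ d)
    (A : Matrix (Fin N) (Fin N) ℝ) {X : Matrix (Fin d) (Fin d) ℝ} (hX : X.BlockTriangular id) :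
    (selMatrix d N n * (A ⊗ₖ X) * (selMatrix d N n)ᵀ).BlockTriangular
      fun p => (p.2 : ℕ) := by
  intro p q hqp
  have hlt : Fin.castLE (hnd q.1) q.2 < Fin.castLE (hnd p.1) p.2 := hqp
  rw [selMatrix_mul_kronecker_mul_transpose_apply hnd]
  exact mul_eq_zero_of_right _ (hX hlt)

theorem charpoly_selMatrix_mul_kronecker_mul_transpose (hnd : ∀ i, n i ≤ d)
    (A : Matrix (Fin N) (Fin N) ℝ) {X : Matrix (Fin d) (Fin d) ℝ} (hX : X.BlockTriangular id) :
    (selMatrix d N n * (A ⊗ₖ X) * (selMatrix d N n)ᵀ).charpoly =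
      (selMatrix d N n * (A ⊗ₖ diagonal X.diag) * (selMatrix d N n)ᵀ).charpoly := by
  refine charpoly_eq_of_blockTriangular
    (blockTriangular_selMatrix_mul_kronecker_mul_transpose hnd A hX)
    (blockTriangular_selMatrix_mul_kronecker_mul_transpose hnd A (blockTriangular_diagonal _))
    fun p q hpq => ?_
  have : Fin.castLE (hnd p.1) p.2 = Fin.castLE (hnd q.1) q.2 := Fin.ext hpq
  rw [selMatrix_mul_kronecker_mul_transpose_apply hnd,
    selMatrix_mul_kronecker_mul_transpose_apply hnd, this, diagonal_apply_eq, diag_apply]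

theorem selMatrix_mul_kronecker_smul_one_mul_transpose (hnd : ∀ i, n i ≤ d)
    (L : Matrix (Fin N) (Fin N) ℝ) (lam k : ℝ) :
    selMatrix d N n * (((1 : Matrix (Fin N) (Fin N) ℝ) - k • L) ⊗ₖ
        (lam • 1 : Matrix (Fin d) (Fin d) ℝ)) * (selMatrix d N n)ᵀ =
      lam • (1 - k • (selMatrix d N n * (L ⊗ₖ (1 : Matrix (Fin d) (Fin d) ℝ)) *
        (selMatrix d N n)ᵀ)) := by
  rw [kronecker_smul, sub_eq_add_neg, ← neg_smul, add_kronecker, one_kronecker_one,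
    smul_kronecker, Matrix.mul_smul, smul_mul, Matrix.mul_add, Matrix.add_mul, Matrix.mul_one,
    selMatrix_mul_transpose hnd, Matrix.mul_smul, smul_mul, neg_smul, ← sub_eq_add_neg]

end Selection

theorem stmt12_general (lam : ℝ) (hlam : 1 ≤ |lam|) (d : ℕ)
    (N : ℕ) (hN : 1 ≤ N) (L : Matrix (Fin N) (Fin N) ℝ)
    (n : Fin N → ℕ) (hn1 : ∀ i, 1 ≤ n i) (hnd : ∀ i, n i ≤ d) (k : ℝ)
    (M : Matrix (Σ i : Fin N, Fin (n i)) (Σ i : Fin N, Fin (n i)) ℝ)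
    (hM : M = selMatrix d N n *
        (((1 : Matrix (Fin N) (Fin N) ℝ) - k • L) ⊗ₖ jordanBlock lam d) *
        (selMatrix d N n)ᵀ) :
    (∀ η₀ : (Σ i : Fin N, Fin (n i)) → ℝ,
        Filter.Tendsto (fun t : ℕ => (M ^ t) *ᵥ η₀) Filter.atTop (nhds 0)) ↔
      ∀ μ ∈ spectrum ℂ ((selMatrix d N n *
          (L ⊗ₖ (1 : Matrix (Fin d) (Fin d) ℝ)) * (selMatrix d N n)ᵀ).map Complex.ofReal),
        ‖1 - (k : ℂ) * μ‖ < 1 / |lam| := by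
  have : Nonempty (Σ i : Fin N, Fin (n i)) := ⟨⟨⟨0, hN⟩, ⟨0, hn1 _⟩⟩⟩
  set C := selMatrix d N n * (L ⊗ₖ (1 : Matrix (Fin d) (Fin d) ℝ)) * (selMatrix d N n)ᵀ
  have hspec : spectrum ℂ (M.map Complex.ofReal) =
      (fun μ => (lam : ℂ) * (1 - k * μ)) '' spectrum ℂ (C.map Complex.ofReal) := by
    rw [hM, spectrum_map_ofReal_eq_of_charpoly_eq (charpoly_selMatrix_mul_kronecker_mul_transpose
      hnd _ (jordanBlock_blockTriangular lam d)), diagonal_diag_jordanBlock,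
      selMatrix_mul_kronecker_smul_one_mul_transpose hnd, ← spectrum.smul_one_sub_smul_eq_image]
    congr 1
    ext p q
    by_cases hpq : p = q <;> simp [hpq, C]
  rw [tendsto_pow_mulVec_iff_schurStable, SchurStable, hspec, Set.forall_mem_image]
  refine forall₂_congr fun μ _ => ?_
  rw [norm_mul, Complex.norm_real, Real.norm_eq_abs, lt_div_iff₀ (one_pos.trans_le hlam),
    mul_comm]

theorem stmt12 (lam : ℝ) (hlam : 1 ≤ |lam|) (d : ℕ) (hd : 1 ≤ d)
    (N : ℕ) (hN : 1 ≤ N) (L : Matrix (Fin N) (Fin N) ℝ)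
    (n : Fin N → ℕ) (hn1 : ∀ i, 1 ≤ n i) (hnd : ∀ i, n i ≤ d) (k : ℝ)
    (M : Matrix (Σ i : Fin N, Fin (n i)) (Σ i : Fin N, Fin (n i)) ℝ)
    (hM : M = selMatrix d N n *
        (((1 : Matrix (Fin N) (Fin N) ℝ) - k • L) ⊗ₖ jordanBlock lam d) *
        (selMatrix d N n)ᵀ) :
    (∀ η₀ : (Σ i : Fin N, Fin (n i)) → ℝ,
        Filter.Tendsto (fun t : ℕ => (M ^ t) *ᵥ η₀) Filter.atTop (nhds 0)) ↔
      ∀ μ ∈ spectrum ℂ ((selMatrix d N n *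
          (L ⊗ₖ (1 : Matrix (Fin d) (Fin d) ℝ)) * (selMatrix d N n)ᵀ).map Complex.ofReal),
        ‖1 - (k : ℂ) * μ‖ < 1 / |lam| :=
  stmt12_general lam hlam d N hN L n hn1 hnd k M hM
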